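/- Let n = 2m be even and let q be an integer with 0 ≤ q ≤ m. Let c ∈ {0,1}^{n−1} with wt(c) ∈ {m+q−1, m+q}. If wt(c) = m+q−1, then Γ_q^{(B)}(c) = {i ∈ {0,…,n−1} : R(c)_i ≥ 0 and R(c)_i ≠ R(c)_j for all j < i}; if wt(c) = m+q, then Γ_q^{(B)}(c) = {i ∈ {0,…,n−1} : R(c)_i ≤ 0 and R(c)_i ≠ R(c)_j for all j < i}. -/

import Mathlib

/-!
Complementing the first `i` bits of `c` negates its running sum up to time `i`, so for `t ≤ i`
the word `Flip (Flip c i) t` has weight `wt c - R(c)ᵢ + R(c)ₜ`. Hence `i ∈ Γ_q^{(B)}(c)` exactly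
when neither `R(c)ᵢ` nor `R(c)ᵢ + 1` (for `wt c = m + q - 1`; `R(c)ᵢ - 1` for `wt c = m + q`)
is visited before time `i`. Since `R(c)` is a `±1` walk from `0`, this says that `R(c)ᵢ` is a
level on the nonnegative (resp. nonpositive) side visited for the first time at `i`.
-/

/-- The Hamming weight of a binary word `x ∈ {0,1}^N`: the number of ones. -/
def wt {N : ℕ} (x : Fin N → Bool) : ℕ :=
  (Finset.univ.filter (fun i => x i = true)).card

/-- `Flip x j` complements the first `j` bits of `x`. -/
def Flip {N : ℕ} (x : Fin N → Bool) (j : ℕ) : Fin N → Bool :=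
  fun i => if (i : ℕ) < j then !(x i) else x i

/-- The running sum `R(x)`: `R(x)₀ = 0` and `R(x)ᵢ = R(x)_{i−1} ± 1`
according to whether the `i`-th bit is `1` or `0`. -/
def RS {N : ℕ} (x : Fin N → Bool) : ℕ → ℤ
  | 0 => 0
  | i + 1 => RS x i + if h : i < N then (if x ⟨i, h⟩ then 1 else -1) else 0

/-- `j ∈ T_B(x,q)`: `j ∈ {0,…,n−1}` and `wt(Flip(x,j)) ∈ {m+q−1, m+q}`. -/
def TBmem (m q : ℕ) (x : Fin (2*m-1) → Bool) (j : ℕ) : Prop :=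
  j ≤ 2*m - 1 ∧ (wt (Flip x j) = m + q - 1 ∨ wt (Flip x j) = m + q)

/-- `Γ_q^{(B)}(c)`: the set of indices `j` such that the word `x = Flip(c,j)`
satisfies `T_B(x,q) ≠ ∅` and `min T_B(x,q) = j`. -/
def GammaB (m q : ℕ) (c : Fin (2*m-1) → Bool) : Set ℕ :=
  {j | TBmem m q (Flip c j) j ∧ ∀ j', TBmem m q (Flip c j) j' → j ≤ j'}

theorem wt_eq_sum {N : ℕ} (x : Fin N → Bool) : (wt x : ℤ) = ∑ i, ((x i).toNat : ℤ) := by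
  rw [wt, Finset.card_filter]; push_cast
  exact Finset.sum_congr rfl fun i _ => by cases x i <;> rfl

theorem wt_update {N : ℕ} (x : Fin N → Bool) (k : Fin N) (b : Bool) :
    (wt (Function.update x k b) : ℤ) = wt x - (x k).toNat + b.toNat := by
  classical
  rw [wt_eq_sum, wt_eq_sum, ← Finset.sum_erase_add _ _ (Finset.mem_univ k),
    ← Finset.sum_erase_add _ _ (Finset.mem_univ k)]
  simp only [Function.update_self]
  rw [Finset.sum_congr rfl fun i hi => by rw [Function.update_of_ne (Finset.ne_of_mem_erase hi)]]
  ring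

theorem Flip_succ {N : ℕ} (c : Fin N → Bool) {j : ℕ} (h : j < N) :
    Flip c (j + 1) = Function.update (Flip c j) ⟨j, h⟩ (!c ⟨j, h⟩) := by
  funext i
  simp only [Flip, Function.update_apply, Fin.ext_iff]
  split_ifs <;> first | rfl | omega | (subst_vars; rfl)

theorem Flip_eq_Flip_of_le {N : ℕ} (c : Fin N → Bool) {j k : ℕ} (hj : N ≤ j) (hk : N ≤ k) :
    Flip c j = Flip c k := by
  funext i
  simp [Flip, i.2.trans_le hj, i.2.trans_le hk]

theorem RS_succ {N : ℕ} (c : Fin N → Bool) {j : ℕ} (h : j < N) :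
    RS c (j + 1) = RS c j + if c ⟨j, h⟩ then 1 else -1 := by
  simp [RS, h]

theorem RS_succ_of_le {N : ℕ} (c : Fin N → Bool) {j : ℕ} (h : N ≤ j) :
    RS c (j + 1) = RS c j := by
  simp [RS, Nat.not_lt.mpr h]

theorem Flip_zero {N : ℕ} (c : Fin N → Bool) : Flip c 0 = c := by
  funext i; simp [Flip]

theorem wt_Flip {N : ℕ} (c : Fin N → Bool) (j : ℕ) : (wt (Flip c j) : ℤ) = wt c - RS c j := by
  induction j with
  | zero => simp [RS, Flip_zero]
  | succ j ih =>
    rcases lt_or_ge j N with h | h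
    · rw [Flip_succ c h, wt_update, ih, RS_succ c h]
      simp only [Flip, lt_irrefl, if_false]
      cases c ⟨j, h⟩ <;> simp <;> ring
    · rw [Flip_eq_Flip_of_le c (by omega : N ≤ j + 1) h, ih, RS_succ_of_le c h]

theorem RS_Flip {N : ℕ} (c : Fin N → Bool) {i j : ℕ} (hij : i ≤ j) : RS (Flip c j) i = -RS c i := by
  induction i with
  | zero => rfl
  | succ i ih =>
    rcases lt_or_ge i N with h | h
    · rw [RS_succ _ h, RS_succ _ h, ih (by omega)]
      simp only [Flip, show i < j by omega, if_true]
      cases c ⟨i, h⟩ <;> simp <;> ring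
    · rw [RS_succ_of_le _ h, RS_succ_of_le _ h, ih (by omega)]

theorem Flip_Flip {N : ℕ} (c : Fin N → Bool) (j : ℕ) : Flip (Flip c j) j = c := by
  funext i
  simp only [Flip]
  split_ifs <;> simp

theorem wt_Flip_Flip {N : ℕ} (c : Fin N → Bool) {i j : ℕ} (hij : i ≤ j) :
    (wt (Flip (Flip c j) i) : ℤ) = wt c - RS c j + RS c i := by
  rw [wt_Flip, wt_Flip, RS_Flip c hij]
  ring

theorem abs_RS_succ_sub_le {N : ℕ} (c : Fin N → Bool) (i : ℕ) : |RS c (i + 1) - RS c i| ≤ 1 := by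
  rcases lt_or_ge i N with h | h
  · rw [RS_succ c h]; split_ifs <;> simp
  · simp [RS_succ_of_le c h]

theorem exists_eq_of_le_of_le_of_step_le {f : ℕ → ℤ} (hf : ∀ i, f (i + 1) ≤ f i + 1)
    {a b : ℕ} {v : ℤ} (hab : a ≤ b) (ha : f a ≤ v) (hb : v ≤ f b) :
    ∃ t, a ≤ t ∧ t ≤ b ∧ f t = v := by
  induction b, hab using Nat.le_induction with
  | base => exact ⟨a, le_rfl, le_rfl, le_antisymm ha hb⟩
  | succ b hab ih =>
    by_cases hv : v ≤ f b
    · obtain ⟨t, hat, htb, ht⟩ := ih hv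
      exact ⟨t, hat, htb.trans b.le_succ, ht⟩
    · exact ⟨b + 1, by omega, le_rfl, by have := hf b; omega⟩

theorem forall_lt_ne_and_ne_add_one_iff {f : ℕ → ℤ} (h0 : f 0 = 0)
    (hf : ∀ i, |f (i + 1) - f i| ≤ 1) (j : ℕ) :
    (∀ t < j, f t ≠ f j ∧ f t ≠ f j + 1) ↔ 0 ≤ f j ∧ ∀ t < j, f j ≠ f t := by
  have hup (i : ℕ) : f (i + 1) ≤ f i + 1 := by have := abs_le.mp (hf i); omega
  have hdown (i : ℕ) : -f (i + 1) ≤ -f i + 1 := by have := abs_le.mp (hf i); omega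
  constructor
  · intro h
    refine ⟨?_, fun t ht => (h t ht).1.symm⟩
    by_contra! hneg
    -- a walk from `0` down to `f j < 0` passes through `f j + 1` before time `j`
    obtain ⟨t, -, htj, ht⟩ := exists_eq_of_le_of_le_of_step_le (f := fun i => -f i) hdown
      (v := -(f j + 1)) j.zero_le (by omega) (by omega)
    obtain rfl | htj := htj.eq_or_lt
    · omega
    · exact (h t htj).2 (by omega)
  · rintro ⟨hj, hnew⟩ t ht
    refine ⟨(hnew t ht).symm, fun hft => ?_⟩
    -- a walk from `0` up to `f t = f j + 1` passes through `f j` no later than time `t`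
    obtain ⟨s, -, hst, hs⟩ :=
      exists_eq_of_le_of_le_of_step_le hup (v := f j) t.zero_le (by omega) (by omega)
    exact hnew s (by omega) hs.symm

theorem forall_lt_ne_and_ne_sub_one_iff {f : ℕ → ℤ} (h0 : f 0 = 0)
    (hf : ∀ i, |f (i + 1) - f i| ≤ 1) (j : ℕ) :
    (∀ t < j, f t ≠ f j ∧ f t ≠ f j - 1) ↔ f j ≤ 0 ∧ ∀ t < j, f j ≠ f t := by
  have := forall_lt_ne_and_ne_add_one_iff (f := fun i => -f i) (by simp [h0])
    (fun i => by rw [← abs_neg]; convert hf i using 2; ring) j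
  simp only [ne_eq, neg_inj, neg_nonneg] at this
  convert this using 4
  omega

theorem mem_GammaB_iff (m q : ℕ) (c : Fin (2 * m - 1) → Bool) (i : ℕ) :
    i ∈ GammaB m q c ↔ i ≤ 2 * m - 1 ∧ (wt c = m + q - 1 ∨ wt c = m + q) ∧
      ∀ t < i, ¬(wt (Flip (Flip c i) t) = m + q - 1 ∨ wt (Flip (Flip c i) t) = m + q) := by
  simp only [GammaB, TBmem, Flip_Flip, ← and_assoc]
  refine and_congr_right fun ⟨hi, _⟩ => ⟨fun h t ht hwt => ?_, fun h t ⟨_, hwt⟩ => ?_⟩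
  · exact (h t ⟨by omega, hwt⟩).not_gt ht
  · exact not_lt.mp fun ht => h t ht hwt

theorem stmt9_general (m q : ℕ) (c : Fin (2*m-1) → Bool) :
    (wt c = m + q - 1 →
      ∀ i, i ∈ GammaB m q c ↔
        (i ≤ 2*m - 1 ∧ 0 ≤ RS c i ∧ ∀ j < i, RS c i ≠ RS c j)) ∧
    (wt c = m + q →
      ∀ i, i ∈ GammaB m q c ↔
        (i ≤ 2*m - 1 ∧ RS c i ≤ 0 ∧ ∀ j < i, RS c i ≠ RS c j)) := by
  have h0 : RS c 0 = 0 := rfl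
  have hstep := abs_RS_succ_sub_le c
  refine ⟨fun hw i => ?_, fun hw i => ?_⟩
  · rw [← forall_lt_ne_and_ne_add_one_iff h0 hstep, mem_GammaB_iff, and_iff_right (Or.inl hw)]
    refine and_congr_right fun hi => forall₂_congr fun t ht => ?_
    have := wt_Flip_Flip c ht.le
    omega
  · rw [← forall_lt_ne_and_ne_sub_one_iff h0 hstep, mem_GammaB_iff, and_iff_right (Or.inr hw)]
    refine and_congr_right fun hi => forall₂_congr fun t ht => ?_
    have := wt_Flip_Flip c ht.le
    omega

/-- running-sum characterization of `Γ_q^{(B)}(c)`. -/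
theorem stmt9 (m q : ℕ) (hq : q ≤ m) (c : Fin (2*m-1) → Bool)
    (hc : wt c = m + q - 1 ∨ wt c = m + q) :
    (wt c = m + q - 1 →
      ∀ i, i ∈ GammaB m q c ↔
        (i ≤ 2*m - 1 ∧ 0 ≤ RS c i ∧ ∀ j < i, RS c i ≠ RS c j)) ∧
    (wt c = m + q →
      ∀ i, i ∈ GammaB m q c ↔
        (i ≤ 2*m - 1 ∧ RS c i ≤ 0 ∧ ∀ j < i, RS c i ≠ RS c j)) :=
  stmt9_general m q c
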